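/- For every partition λ ⊢ n−1 and every 0 ≤ k < n, the map jdt is a bijection from the set {k+T : T ∈ SYT(λ^□), δ(T) = n} of rotated tableaux onto the set {P ∈ SYT(λ^□) : δ(P) = k}. -/

import Mathlib

open scoped Classical

noncomputable section

namespace SchurRot

/-! ### Permutations -/

/-- The value of the permutation `π ∈ S_n` (in one-line notation, with positions and
values `1,…,n`) at position `i ∈ [1,n]`. -/
def permVal {n : ℕ} (π : Equiv.Perm (Fin n)) (i : ℕ) : ℕ :=
  if h : i - 1 < n then ((π ⟨i - 1, h⟩ : Fin n) : ℕ) + 1 else 0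

/-- The descent set `Des(π) = {i ∈ [n-1] : π(i) > π(i+1)}`. -/
def DesPerm {n : ℕ} (π : Equiv.Perm (Fin n)) : Finset ℕ :=
  (Finset.Icc 1 (n - 1)).filter fun i => permVal π (i + 1) < permVal π i

/-- The cyclic descent set of `π ∈ S_n`: `Des(π)`, with `n` added iff `π(n) > π(1)`. -/
def cDesPerm {n : ℕ} (π : Equiv.Perm (Fin n)) : Finset ℕ :=
  if permVal π 1 < permVal π n then insert n (DesPerm π) else DesPerm π

/-- `π ∈ S_n` fixes the letter `n` (so it can be viewed as an element of `S_{n-1}`). -/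
def FixesTop {n : ℕ} (π : Equiv.Perm (Fin n)) : Prop :=
  ∀ i : Fin n, (i : ℕ) = n - 1 → π i = i

/-! ### Quasisymmetric and symmetric functions, in variables `x_1, x_2, …`
indexed by positive natural numbers (the variable `x_0` is unused). -/

/-- The fundamental quasisymmetric function `F_{n,D}`, as a formal power series in the
variables `x_i, i ∈ ℕ` (only variables with positive index are used): the coefficient of
a monomial `m` is the number of weakly increasing sequences `1 ≤ i_1 ≤ … ≤ i_n`, strictly
increasing at positions in `D`, with content monomial `m`. -/
def Fqs (n : ℕ) (D : Finset ℕ) : MvPowerSeries ℕ ℤ :=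
  fun m => (Set.ncard {g : Fin n → ℕ |
    (∀ p, 1 ≤ g p) ∧ Monotone g ∧
    (∀ j ∈ D, ∀ (h1 : j - 1 < n) (h2 : j < n), g ⟨j - 1, h1⟩ < g ⟨j, h2⟩) ∧
    (∑ p, Finsupp.single (g p) (1 : ℕ)) = m} : ℤ)

/-- `Q(B) = Σ_{π ∈ B} F_{m, Des(π)}` for a finite set `B` of permutations. -/
def Qset (m : ℕ) {n : ℕ} (B : Finset (Equiv.Perm (Fin n))) : MvPowerSeries ℕ ℤ :=
  ∑ π ∈ B, Fqs m (DesPerm π)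

/-- `Q(B)` for a multiset `B` of permutations, counted with multiplicity. -/
def Qmult (m : ℕ) {n : ℕ} (B : Multiset (Equiv.Perm (Fin n))) : MvPowerSeries ℕ ℤ :=
  (B.map fun π => Fqs m (DesPerm π)).sum

/-- The set `A·C_n = {π c^k : π ∈ A, 0 ≤ k < n}`, where `c = finRotate n` is the
`n`-cycle `(1,2,…,n)`. -/
def ACn {n : ℕ} (A : Finset (Equiv.Perm (Fin n))) : Finset (Equiv.Perm (Fin n)) :=
  (A ×ˢ Finset.range n).image fun p => p.1 * (finRotate n) ^ p.2

/-- The multiset `A·C_n`, counted with multiplicities. -/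
def ACmult {n : ℕ} (A : Multiset (Equiv.Perm (Fin n))) : Multiset (Equiv.Perm (Fin n)) :=
  A.bind fun π => (Multiset.range n).map fun k => π * (finRotate n) ^ k

/-- A formal power series in the variables `x_i, i ∈ ℕ` is a symmetric function if its
coefficients are invariant under every permutation of the variables. -/
def IsSymmFn (f : MvPowerSeries ℕ ℤ) : Prop :=
  ∀ (σ : Equiv.Perm ℕ) (m : ℕ →₀ ℕ),
    MvPowerSeries.coeff (Finsupp.equivMapDomain σ m) f = MvPowerSeries.coeff m f

/-! ### Tableaux: fillings of an arbitrary finite cell set (in English notation,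
cell `(i,j)` is in row `i` (increasing downwards) and column `j`). -/

/-- A semistandard filling of `cells` (entries ≥ 1, weakly increasing along rows,
strictly increasing down columns, `0` outside `cells`). -/
def IsSSYT (cells : Finset (ℕ × ℕ)) (g : ℕ × ℕ → ℕ) : Prop :=
  (∀ c, c ∉ cells → g c = 0) ∧ (∀ c ∈ cells, 1 ≤ g c) ∧
  (∀ a ∈ cells, ∀ b ∈ cells, a.1 = b.1 → a.2 ≤ b.2 → g a ≤ g b) ∧
  (∀ a ∈ cells, ∀ b ∈ cells, a.2 = b.2 → a.1 < b.1 → g a < g b)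

/-- The content monomial of a filling. -/
def contentOf (cells : Finset (ℕ × ℕ)) (g : ℕ × ℕ → ℕ) : ℕ →₀ ℕ :=
  ∑ c ∈ cells, Finsupp.single (g c) 1

/-- The (skew) Schur function of an arbitrary finite cell set: the sum, over all
semistandard fillings, of their content monomials. -/
def schurOf (cells : Finset (ℕ × ℕ)) : MvPowerSeries ℕ ℤ :=
  fun m => (Set.ncard {g : ℕ × ℕ → ℕ | IsSSYT cells g ∧ contentOf cells g = m} : ℤ)

/-- `f` is Schur-positive of degree `m`: a nonnegative integer combination of Schur
functions of partitions of `m` (encoded by a multiset of Young diagrams). -/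
def SchurPositive (m : ℕ) (f : MvPowerSeries ℕ ℤ) : Prop :=
  ∃ M : Multiset YoungDiagram, (∀ μ ∈ M, μ.cells.card = m) ∧
    f = (M.map fun μ => schurOf μ.cells).sum

/-! ### Standard fillings, rotation, reading words -/

/-- A filling of `cells` by the letters `1,…,n`, each used exactly once (and `0`
outside `cells`). -/
def IsFillingF (n : ℕ) (cells : Finset (ℕ × ℕ)) (f : ℕ × ℕ → ℕ) : Prop :=
  Set.BijOn f ↑cells (Set.Icc 1 n) ∧ ∀ c, c ∉ cells → f c = 0

/-- A filling is standard if its rows and columns increase. -/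
def IsStandardF (cells : Finset (ℕ × ℕ)) (f : ℕ × ℕ → ℕ) : Prop :=
  (∀ a ∈ cells, ∀ b ∈ cells, a.1 = b.1 → a.2 < b.2 → f a < f b) ∧
  (∀ a ∈ cells, ∀ b ∈ cells, a.2 = b.2 → a.1 < b.1 → f a < f b)

/-- Addition of `k` modulo `n` on the letters `1,…,n` (with `0` identified with `n`). -/
def rotval (n k e : ℕ) : ℕ := (e + k - 1) % n + 1

/-- Addition of an integer `k` modulo `n` on the letters `1,…,n`. -/
def rotvalZ (n : ℕ) (k : ℤ) (e : ℕ) : ℕ := (((e : ℤ) + k - 1) % (n : ℤ)).toNat + 1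

/-- Apply `φ` to every entry of a filling (keeping `0` outside `cells`);
e.g. `mapEntries cells (rotval n k) T` is the rotated tableau `k + T`. -/
def mapEntries (cells : Finset (ℕ × ℕ)) (φ : ℕ → ℕ) (f : ℕ × ℕ → ℕ) : ℕ × ℕ → ℕ :=
  fun c => if c ∈ cells then φ (f c) else 0

/-- The row containing the entry `e`. -/
def rowOf (cells : Finset (ℕ × ℕ)) (f : ℕ × ℕ → ℕ) (e : ℕ) : ℕ :=
  sInf {i | ∃ j, (i, j) ∈ cells ∧ f (i, j) = e}

/-- The cell containing the entry `e`. -/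
def cellOf (cells : Finset (ℕ × ℕ)) (f : ℕ × ℕ → ℕ) (e : ℕ) : ℕ × ℕ :=
  (rowOf cells f e,
    sInf {j | (rowOf cells f e, j) ∈ cells ∧ f (rowOf cells f e, j) = e})

/-- The cyclic descent set of a (rotated) filling of size `n`:
`{i ∈ [n] : i+1 (mod n) lies in a strictly lower row than i}`. -/
def cDesRot (n : ℕ) (cells : Finset (ℕ × ℕ)) (f : ℕ × ℕ → ℕ) : Finset ℕ :=
  (Finset.Icc 1 n).filter fun i => rowOf cells f i < rowOf cells f (rotval n 1 i)

/-- The descent set of a filling of size `n`: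
`{i ∈ [n-1] : i+1 lies in a strictly lower row than i}`. -/
def DesTab (n : ℕ) (cells : Finset (ℕ × ℕ)) (f : ℕ × ℕ → ℕ) : Finset ℕ :=
  (Finset.Icc 1 (n - 1)).filter fun i => rowOf cells f i < rowOf cells f (i + 1)

/-- `a` comes before `b` in reading order (rows left to right, bottom row first). -/
def readBefore (a b : ℕ × ℕ) : Prop :=
  b.1 < a.1 ∨ (a.1 = b.1 ∧ a.2 < b.2)

/-- The (1-indexed) position of the cell `c` in the reading order of `cells`. -/
def posInRead (cells : Finset (ℕ × ℕ)) (c : ℕ × ℕ) : ℕ :=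
  (cells.filter fun c' => readBefore c' c).card + 1

/-- The value at `e` of the inverse of the reading word of the filling `f`, i.e. the
position of the entry `e` in the reading word. -/
def invReadVal (cells : Finset (ℕ × ℕ)) (f : ℕ × ℕ → ℕ) (e : ℕ) : ℕ :=
  posInRead cells (cellOf cells f e)

/-- `A_λ` (for `cells` the diagram of `λ ⊢ m`): the set of permutations in `S_m` that are
inverse reading words of standard Young tableaux of shape `λ`. -/
def invWordSet (m : ℕ) (cells : Finset (ℕ × ℕ)) : Finset (Equiv.Perm (Fin m)) :=
  Finset.univ.filter fun π => ∃ f : ℕ × ℕ → ℕ,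
    IsFillingF m cells f ∧ IsStandardF cells f ∧
    ∀ e ∈ Finset.Icc 1 m, permVal π e = invReadVal cells f e

/-! ### The jeu-de-taquin type straightening algorithms -/

/-- The entry `i` is short: some entry immediately above it or immediately to its left
is larger. -/
def IsShort (cells : Finset (ℕ × ℕ)) (f : ℕ × ℕ → ℕ) (i : ℕ) : Prop :=
  ∃ c ∈ cells, f c = i ∧
    ((1 ≤ c.1 ∧ (c.1 - 1, c.2) ∈ cells ∧ i < f (c.1 - 1, c.2)) ∨
     (1 ≤ c.2 ∧ (c.1, c.2 - 1) ∈ cells ∧ i < f (c.1, c.2 - 1)))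

/-- The entry `i` is tall: some entry immediately below it or immediately to its right
is smaller. -/
def IsTall (cells : Finset (ℕ × ℕ)) (f : ℕ × ℕ → ℕ) (i : ℕ) : Prop :=
  ∃ c ∈ cells, f c = i ∧
    (((c.1 + 1, c.2) ∈ cells ∧ f (c.1 + 1, c.2) < i) ∨
     ((c.1, c.2 + 1) ∈ cells ∧ f (c.1, c.2 + 1) < i))

def shorts (n : ℕ) (cells : Finset (ℕ × ℕ)) (f : ℕ × ℕ → ℕ) : Finset ℕ :=
  (Finset.Icc 1 n).filter fun i => IsShort cells f i

def talls (n : ℕ) (cells : Finset (ℕ × ℕ)) (f : ℕ × ℕ → ℕ) : Finset ℕ :=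
  (Finset.Icc 1 n).filter fun i => IsTall cells f i

/-- One elementary step of `jdt`: take the minimal short entry `i` and switch it with
the larger of the entries immediately above it and immediately to its left. -/
def stepFun (n : ℕ) (cells : Finset (ℕ × ℕ)) (f : ℕ × ℕ → ℕ) : ℕ × ℕ → ℕ :=
  if h : (shorts n cells f).Nonempty then
    let i := (shorts n cells f).min' h
    let c := cellOf cells f i
    let av := if 1 ≤ c.1 ∧ (c.1 - 1, c.2) ∈ cells then f (c.1 - 1, c.2) else 0
    let lv := if 1 ≤ c.2 ∧ (c.1, c.2 - 1) ∈ cells then f (c.1, c.2 - 1) else 0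
    mapEntries cells (Equiv.swap i (max av lv)) f
  else f

/-- One elementary step of `ijdt`: take the maximal tall entry `i` and switch it with
the smaller of the entries immediately below it and immediately to its right. -/
def istepFun (n : ℕ) (cells : Finset (ℕ × ℕ)) (f : ℕ × ℕ → ℕ) : ℕ × ℕ → ℕ :=
  if h : (talls n cells f).Nonempty then
    let i := (talls n cells f).max' h
    let c := cellOf cells f i
    let bv := if (c.1 + 1, c.2) ∈ cells then f (c.1 + 1, c.2) else n + 1
    let rv := if (c.1, c.2 + 1) ∈ cells then f (c.1, c.2 + 1) else n + 1
    mapEntries cells (Equiv.swap i (min bv rv)) f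
  else f

/-- The straightening `jdt`: repeat the elementary step until the filling is standard. -/
def jdtFun (n : ℕ) (cells : Finset (ℕ × ℕ)) (f : ℕ × ℕ → ℕ) : ℕ × ℕ → ℕ :=
  if h : ∃ m, IsStandardF cells ((stepFun n cells)^[m] f) then
    (stepFun n cells)^[Nat.find h] f
  else f

/-- The straightening `ijdt`: repeat the reverse elementary step until the filling is
standard. -/
def ijdtFun (n : ℕ) (cells : Finset (ℕ × ℕ)) (f : ℕ × ℕ → ℕ) : ℕ × ℕ → ℕ :=
  if h : ∃ m, IsStandardF cells ((istepFun n cells)^[m] f) then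
    (istepFun n cells)^[Nat.find h] f
  else f

/-! ### The shape `λ^□` -/

/-- The cell of the disconnected box of `λ^□`, strictly north and strictly east of `λ`. -/
def boxCell (lam : YoungDiagram) : ℕ × ℕ := (0, lam.rowLen 0)

/-- The skew shape `λ^□`: `λ` (shifted one row down) together with one disconnected box
at its upper right corner. -/
def boxShape (lam : YoungDiagram) : Finset (ℕ × ℕ) :=
  insert (boxCell lam) (lam.cells.image fun c => (c.1 + 1, c.2))

/-- `δ(P)`: the entry of the disconnected box of a filling of `λ^□`. -/
def deltaOf (lam : YoungDiagram) (f : ℕ × ℕ → ℕ) : ℕ := f (boxCell lam)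

/-- The inverse of `jdt` on `SYT(λ^□)`: `jdt⁻¹(P) = δ(P) + ijdt(-δ(P) + P)`. -/
def jdtInvFun (n : ℕ) (lam : YoungDiagram) (P : ℕ × ℕ → ℕ) : ℕ × ℕ → ℕ :=
  mapEntries (boxShape lam) (rotval n (deltaOf lam P))
    (ijdtFun n (boxShape lam)
      (mapEntries (boxShape lam) (rotval n (n - deltaOf lam P)) P))

/-- The cyclic descent set of `P ∈ SYT(λ^□)`: `cDes(P) = cDes_rot(jdt⁻¹(P))`. -/
def cDesBox (n : ℕ) (lam : YoungDiagram) (P : ℕ × ℕ → ℕ) : Finset ℕ :=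
  cDesRot n (boxShape lam) (jdtInvFun n lam P)

/-- The restriction of `f` to the entries in `S` is standard: there are no two entries
in `S` in which the smaller one lies weakly south and weakly east of the larger one. -/
def RestrictedStd (cells : Finset (ℕ × ℕ)) (f : ℕ × ℕ → ℕ) (S : Finset ℕ) : Prop :=
  ∀ a ∈ cells, ∀ b ∈ cells, f a ∈ S → f b ∈ S →
    a.1 ≤ b.1 → a.2 ≤ b.2 → a ≠ b → f a < f b

end SchurRot


noncomputable section
namespace SchurRot

/-!
Only two features of `λ^□` matter: its cells form an order-convex subset of `ℕ × ℕ`, and the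
box is incomparable with every other cell, so it never moves and keeps its entry.

In `k + T` the small entries `1, …, k` and the large entries `k+1, …, n` each form a standard
filling, and the large ones occupy a lower set. A step of `jdt` exchanges the minimal short
entry, which is small, with the larger of its north-west neighbours, which is large. This keeps
both subfillings standard and keeps every small entry that sits directly north-west of a large
one below all short entries. The last invariant identifies, in the result of a step, the pair
that was exchanged, so a step is injective; a rotated tableau is not the result of any step
because its large entries form a lower set, so `jdt` is injective. Termination: the sum of the
entries weighted by their anti-diagonal grows at every step. Surjectivity is a count: rotation
is injective, and moving the entry of the box from `n` to `k` (shifting the entries in between)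
is a bijection between the standard fillings with `δ = n` and those with `δ = k`.
-/

section Order

variable {α β : Type*} [PartialOrder α] [IsStronglyCoatomic α] [WellFoundedLT α] [Preorder β]
  {s : Set α} {f : α → β}

theorem lt_of_lt_of_covBy_lt (hs : s.OrdConnected) {t : Set β} (ht : IsLowerSet t)
    (hcov : ∀ ⦃d⦄, d ∈ s → ∀ ⦃c⦄, c ∈ s → d ⋖ c → f c ∈ t → f d < f c) :
    ∀ ⦃b⦄, b ∈ s → f b ∈ t → ∀ ⦃a⦄, a ∈ s → a < b → f a < f b := by
  intro b
  induction b using WellFoundedLT.induction with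
  | _ b ih =>
    intro hb hbt a ha hab
    obtain ⟨d, had, hdb⟩ := exists_le_covBy_of_lt hab
    have hd : d ∈ s := hs.out ha hb ⟨had, hdb.le⟩
    have hfdb := hcov hd hb hdb hbt
    rcases had.eq_or_lt with rfl | had
    · exact hfdb
    · exact (ih d hdb.lt hd (ht hfdb.le hbt) ha had).trans hfdb

theorem strictMonoOn_of_covBy (hs : s.OrdConnected)
    (hcov : ∀ ⦃d⦄, d ∈ s → ∀ ⦃c⦄, c ∈ s → d ⋖ c → f d < f c) : StrictMonoOn f s :=
  fun _ ha _ hb hab =>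
    lt_of_lt_of_covBy_lt hs isLowerSet_univ (fun _ hd _ hc hdc _ => hcov hd hc hdc) hb trivial
      ha hab

end Order

theorem covBy_iff_eq_up_or_left {d c : ℕ × ℕ} :
    d ⋖ c ↔ (1 ≤ c.1 ∧ d = (c.1 - 1, c.2)) ∨ (1 ≤ c.2 ∧ d = (c.1, c.2 - 1)) := by
  rw [Prod.covBy_iff, Nat.covBy_iff_add_one_eq, Nat.covBy_iff_add_one_eq, Prod.ext_iff,
    Prod.ext_iff]
  omega

theorem add_eq_add_add_one_of_covBy {d c : ℕ × ℕ} (h : d ⋖ c) : c.1 + c.2 = d.1 + d.2 + 1 := by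
  rcases covBy_iff_eq_up_or_left.1 h with ⟨h1, rfl⟩ | ⟨h1, rfl⟩ <;> dsimp only <;> omega

variable {n k : ℕ} {C : Finset (ℕ × ℕ)} {f P T : ℕ × ℕ → ℕ} {φ ψ : ℕ → ℕ}
  {b c c' d : ℕ × ℕ}

theorem isStandardF_of_strictMonoOn (h : StrictMonoOn f C) : IsStandardF C f :=
  ⟨fun _ ha _ hb h1 h2 => h ha hb (Prod.lt_iff.2 (Or.inr ⟨h1.le, h2⟩)),
    fun _ ha _ hb h2 h1 => h ha hb (Prod.lt_iff.2 (Or.inl ⟨h1, h2.le⟩))⟩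

theorem IsStandardF.strictMonoOn (hC : (C : Set (ℕ × ℕ)).OrdConnected) (h : IsStandardF C f) :
    StrictMonoOn f C :=
  strictMonoOn_of_covBy hC fun d hd c hc hdc => by
    rcases Prod.covBy_iff.1 hdc with ⟨h1, h2⟩ | ⟨h1, h2⟩
    · exact h.2 d hd c hc h2 h1.lt
    · exact h.1 d hd c hc h2 h1.lt

theorem isShort_iff {i : ℕ} :
    IsShort C f i ↔ ∃ c ∈ C, f c = i ∧ ∃ d ∈ C, d ⋖ c ∧ i < f d := by
  refine exists_congr fun c => and_congr_right fun _ => and_congr_right fun _ => ?_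
  constructor
  · rintro (⟨h1, hd, hi⟩ | ⟨h1, hd, hi⟩)
    exacts [⟨_, hd, covBy_iff_eq_up_or_left.2 (Or.inl ⟨h1, rfl⟩), hi⟩,
      ⟨_, hd, covBy_iff_eq_up_or_left.2 (Or.inr ⟨h1, rfl⟩), hi⟩]
  · rintro ⟨d, hd, hdc, hi⟩
    rcases covBy_iff_eq_up_or_left.1 hdc with ⟨h1, rfl⟩ | ⟨h1, rfl⟩
    exacts [Or.inl ⟨h1, hd, hi⟩, Or.inr ⟨h1, hd, hi⟩]

namespace IsFillingF

theorem mem_Icc (hf : IsFillingF n C f) (hc : c ∈ C) : f c ∈ Set.Icc 1 n := hf.1.mapsTo hc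

theorem injOn (hf : IsFillingF n C f) : Set.InjOn f C := hf.1.injOn

theorem comp_swap (hf : IsFillingF n C f) (hc : c ∈ C) (hc' : c' ∈ C) :
    IsFillingF n C (f ∘ Equiv.swap c c') := by
  have hmaps : Set.MapsTo (Equiv.swap c c') C C := fun x hx => by
    rw [Equiv.swap_apply_def]
    split_ifs <;> assumption
  refine ⟨hf.1.comp (Set.InvOn.bijOn ⟨fun _ _ => by simp, fun _ _ => by simp⟩ hmaps hmaps),
    fun x hx => ?_⟩
  rw [Function.comp_apply, Equiv.swap_apply_of_ne_of_ne (ne_of_mem_of_not_mem hc hx).symm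
    (ne_of_mem_of_not_mem hc' hx).symm]
  exact hf.2 x hx

theorem mem_shorts (hf : IsFillingF n C f) (hd : d ∈ C) (hc : c ∈ C) (hdc : d ⋖ c)
    (hlt : f c < f d) : f c ∈ shorts n C f :=
  Finset.mem_filter.2
    ⟨Finset.mem_Icc.2 (hf.mem_Icc hc), isShort_iff.2 ⟨c, hc, rfl, d, hd, hdc, hlt⟩⟩

theorem lt_of_lt_of_le_shorts (hC : (C : Set (ℕ × ℕ)).OrdConnected) (hf : IsFillingF n C f)
    {i : ℕ} (hmin : ∀ s ∈ shorts n C f, i ≤ s) {a b : ℕ × ℕ} (hb : b ∈ C) (hbi : f b < i)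
    (ha : a ∈ C) (hab : a < b) : f a < f b :=
  lt_of_lt_of_covBy_lt hC (isLowerSet_Iio i) (fun _ hd _ hc hdc hci =>
    (hf.injOn.ne hd hc hdc.ne).lt_or_gt.resolve_right fun h =>
      (hmin _ (hf.mem_shorts hd hc hdc h)).not_gt hci) hb hbi ha hab

theorem isStandardF_of_shorts_eq_empty (hC : (C : Set (ℕ × ℕ)).OrdConnected)
    (hf : IsFillingF n C f) (h : shorts n C f = ∅) : IsStandardF C f :=
  isStandardF_of_strictMonoOn fun _ ha _ hb hab =>
    hf.lt_of_lt_of_le_shorts hC (i := n + 1) (by simp [h]) hb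
      (Nat.lt_succ_of_le (hf.mem_Icc hb).2) ha hab

theorem shorts_nonempty (hC : (C : Set (ℕ × ℕ)).OrdConnected) (hf : IsFillingF n C f)
    (h : ¬ IsStandardF C f) : (shorts n C f).Nonempty :=
  Finset.nonempty_iff_ne_empty.2 fun he => h (hf.isStandardF_of_shorts_eq_empty hC he)

end IsFillingF

theorem cellOf_apply (hf : Set.InjOn f C) (hc : c ∈ C) : cellOf C f (f c) = c := by
  have hrow : rowOf C f (f c) = c.1 := by
    have : {i | ∃ j, (i, j) ∈ C ∧ f (i, j) = f c} = {c.1} := by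
      ext i
      refine ⟨fun ⟨j, hj, hfj⟩ => congrArg Prod.fst (hf hj hc hfj), ?_⟩
      rintro rfl
      exact ⟨c.2, hc, rfl⟩
    rw [rowOf, this, csInf_singleton]
  have hcol : {j | (c.1, j) ∈ C ∧ f (c.1, j) = f c} = {c.2} := by
    ext j
    refine ⟨fun ⟨hj, hfj⟩ => congrArg Prod.snd (hf hj hc hfj), ?_⟩
    rintro rfl
    exact ⟨hc, rfl⟩
  rw [cellOf, hrow, hcol, csInf_singleton]

theorem mapEntries_comp_swap (hf : IsFillingF n C f) (hc : c ∈ C) (hc' : c' ∈ C) :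
    mapEntries C (Equiv.swap (f c) (f c')) f = f ∘ Equiv.swap c c' := by
  funext x
  by_cases hx : x ∈ C
  · rw [mapEntries, if_pos hx, Function.comp_apply]
    rcases eq_or_ne x c with rfl | hxc
    · simp
    rcases eq_or_ne x c' with rfl | hxc'
    · simp
    rw [Equiv.swap_apply_of_ne_of_ne hxc hxc', Equiv.swap_apply_of_ne_of_ne
      (hf.injOn.ne hx hc hxc) (hf.injOn.ne hx hc' hxc')]
  · rw [mapEntries, if_neg hx]
    exact ((hf.comp_swap hc hc').2 x hx).symm

/-- Satisfied by every filling met while computing `jdt (k + T)`. -/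
structure SwitchInv (n k : ℕ) (C : Finset (ℕ × ℕ)) (f : ℕ × ℕ → ℕ) : Prop where
  isFilling : IsFillingF n C f
  small : StrictMonoOn f {x | x ∈ C ∧ f x ≤ k}
  large : StrictMonoOn f {x | x ∈ C ∧ k < f x}
  le_shorts : ∀ ⦃b⦄, b ∈ C → ∀ ⦃d⦄, d ∈ C → b ⋖ d → f b ≤ k → k < f d →
    ∀ s ∈ shorts n C f, f b ≤ s

structure IsSwitchAt (n k : ℕ) (C : Finset (ℕ × ℕ)) (f : ℕ × ℕ → ℕ) (c' c : ℕ × ℕ) :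
    Prop where
  mem' : c' ∈ C
  mem : c ∈ C
  covBy : c' ⋖ c
  le : f c ≤ k
  lt : k < f c'
  mem_shorts : f c ∈ shorts n C f
  le_shorts : ∀ s ∈ shorts n C f, f c ≤ s
  le_max : ∀ ⦃d⦄, d ∈ C → d ⋖ c → f d ≤ f c'
  stepFun_eq : stepFun n C f = f ∘ Equiv.swap c c'

/-- The `max` is the value that `stepFun` exchanges with the short entry at `c`. -/
theorem exists_covBy_eq_max (hd : d ∈ C) (hdc : d ⋖ c) (hpos : 0 < f d) :
    ∃ c' ∈ C, c' ⋖ c ∧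
      f c' = max (if 1 ≤ c.1 ∧ (c.1 - 1, c.2) ∈ C then f (c.1 - 1, c.2) else 0)
        (if 1 ≤ c.2 ∧ (c.1, c.2 - 1) ∈ C then f (c.1, c.2 - 1) else 0) ∧
      ∀ ⦃e⦄, e ∈ C → e ⋖ c → f e ≤ f c' := by
  set up := if 1 ≤ c.1 ∧ (c.1 - 1, c.2) ∈ C then f (c.1 - 1, c.2) else 0
  set left := if 1 ≤ c.2 ∧ (c.1, c.2 - 1) ∈ C then f (c.1, c.2 - 1) else 0
  have hle : ∀ ⦃e⦄, e ∈ C → e ⋖ c → f e ≤ max up left := by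
    intro e he hec
    rcases covBy_iff_eq_up_or_left.1 hec with ⟨h1, rfl⟩ | ⟨h1, rfl⟩
    · exact (if_pos ⟨h1, he⟩).ge.trans (le_max_left up left)
    · exact (if_pos ⟨h1, he⟩).ge.trans (le_max_right up left)
  have hmax : 0 < max up left := hpos.trans_le (hle hd hdc)
  rcases max_choice up left with h | h <;> rw [h] at hmax hle ⊢
  · by_cases hc : 1 ≤ c.1 ∧ (c.1 - 1, c.2) ∈ C
    · exact ⟨_, hc.2, covBy_iff_eq_up_or_left.2 (Or.inl ⟨hc.1, rfl⟩), (if_pos hc).symm,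
        fun _ he hec => (hle he hec).trans_eq (if_pos hc)⟩
    · exact absurd (if_neg hc) hmax.ne'
  · by_cases hc : 1 ≤ c.2 ∧ (c.1, c.2 - 1) ∈ C
    · exact ⟨_, hc.2, covBy_iff_eq_up_or_left.2 (Or.inr ⟨hc.1, rfl⟩), (if_pos hc).symm,
        fun _ he hec => (hle he hec).trans_eq (if_pos hc)⟩
    · exact absurd (if_neg hc) hmax.ne'

theorem SwitchInv.exists_isSwitchAt (hf : SwitchInv n k C f) (hne : (shorts n C f).Nonempty) :
    ∃ c' c, IsSwitchAt n k C f c' c := by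
  have hmin := (shorts n C f).min'_mem hne
  obtain ⟨c, hc, hci, d, hd, hdc, hlt⟩ := isShort_iff.1 (Finset.mem_filter.1 hmin).2
  obtain ⟨c', hc', hc'c, hmax, hle⟩ :=
    exists_covBy_eq_max hd hdc ((Nat.zero_le _).trans_lt hlt)
  have hlt' : f c < f c' := hci ▸ hlt.trans_le (hle hd hdc)
  have hk' : k < f c' := by
    by_contra! h
    exact (hf.small ⟨hc', h⟩ ⟨hc, hlt'.le.trans h⟩ hc'c.lt).not_gt hlt'
  have hk : f c ≤ k := by
    by_contra! h
    exact (hf.large ⟨hc', h.trans hlt'⟩ ⟨hc, h⟩ hc'c.lt).not_gt hlt'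
  refine ⟨c', c, hc', hc, hc'c, hk, hk', hci ▸ hmin, fun s hs => hci ▸ Finset.min'_le _ s hs,
    hle, ?_⟩
  rw [← mapEntries_comp_swap hf.isFilling hc hc', stepFun, dif_pos hne]
  simp only [← hci, cellOf_apply hf.isFilling.injOn hc, ← hmax]

theorem comp_swap_apply_of_ne {x : ℕ × ℕ} (hxc : x ≠ c) (hxc' : x ≠ c') :
    (f ∘ Equiv.swap c c') x = f x := by
  rw [Function.comp_apply, Equiv.swap_apply_of_ne_of_ne hxc hxc']

namespace IsSwitchAt

theorem lt' (hs : IsSwitchAt n k C f c' c) : f c < f c' := hs.le.trans_lt hs.lt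

theorem ne (hs : IsSwitchAt n k C f c' c) : c ≠ c' := hs.covBy.lt.ne'

theorem lt_of_lt_of_ne (hC : (C : Set (ℕ × ℕ)).OrdConnected) (hf : IsFillingF n C f)
    (hs : IsSwitchAt n k C f c' c) (hb : b ∈ C)
    (hcb : c' < b) (hbc : b ≠ c) : f c < f b := by
  refine (hf.injOn.ne hs.mem hb hbc.symm).lt_or_gt.resolve_right fun hbc' => ?_
  obtain ⟨x, hc'x, hxb⟩ := exists_covBy_le_of_lt hcb
  have hx : x ∈ C := hC.out hs.mem' hb ⟨hc'x.le, hxb⟩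
  have hxc : f x < f c := by
    rcases hxb.eq_or_lt with rfl | hxb
    · exact hbc'
    · exact (hf.lt_of_lt_of_le_shorts hC hs.le_shorts hb hbc' hx hxb).trans hbc'
  exact (hs.le_shorts _ (hf.mem_shorts hs.mem' hx hc'x (hxc.trans hs.lt'))).not_gt hxc

theorem lt_of_lt_of_ne' (hC : (C : Set (ℕ × ℕ)).OrdConnected)
    (hf : SwitchInv n k C f) (hs : IsSwitchAt n k C f c' c) {a : ℕ × ℕ}
    (ha : a ∈ C) (hac : a < c) (hac' : a ≠ c') (hak : k < f a) : f a < f c' := by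
  by_cases hle : a ≤ c'
  · exact hf.large ⟨ha, hak⟩ ⟨hs.mem', hs.lt⟩ (hle.lt_of_ne hac')
  obtain ⟨u, hau, huc⟩ := exists_le_covBy_of_lt hac
  have hu : u ∈ C := hC.out ha hs.mem ⟨hau, huc.le⟩
  have hfu : f u < f c' :=
    (hs.le_max hu huc).lt_of_ne (hf.isFilling.injOn.ne hu hs.mem' fun h => hle (h ▸ hau))
  rcases le_or_gt (f u) k with huk | huk
  · have hua : a < u := hau.lt_of_ne fun h => (h ▸ hak).not_ge huk
    have := hf.isFilling.lt_of_lt_of_le_shorts hC hs.le_shorts hu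
      (hf.small ⟨hu, huk⟩ ⟨hs.mem, hs.le⟩ huc.lt) ha hua
    omega
  · rcases hau.eq_or_lt with rfl | hau
    · exact hfu
    · exact (hf.large ⟨ha, hak⟩ ⟨hu, huk⟩ hau).trans hfu

theorem small (hC : (C : Set (ℕ × ℕ)).OrdConnected)
    (hf : SwitchInv n k C f) (hs : IsSwitchAt n k C f c' c) :
    StrictMonoOn (f ∘ Equiv.swap c c') {x | x ∈ C ∧ (f ∘ Equiv.swap c c') x ≤ k} := by
  rintro a ⟨ha, hak⟩ b ⟨hb, hbk⟩ hab
  have hlarge : ∀ {x}, (f ∘ Equiv.swap c c') x ≤ k → x ≠ c := by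
    rintro x hx rfl
    simp only [Function.comp_apply, Equiv.swap_apply_left] at hx
    exact hx.not_gt hs.lt
  have hac := hlarge hak
  have hbc := hlarge hbk
  rcases eq_or_ne b c' with rfl | hbc'
  · rw [comp_swap_apply_of_ne hac hab.ne] at hak ⊢
    simpa using hf.small ⟨ha, hak⟩ ⟨hs.mem, hs.le⟩ (hab.trans hs.covBy.lt)
  rw [comp_swap_apply_of_ne hbc hbc'] at hbk ⊢
  rcases eq_or_ne a c' with rfl | hac'
  · simpa using lt_of_lt_of_ne hC hf.isFilling hs hb hab hbc
  rw [comp_swap_apply_of_ne hac hac'] at hak ⊢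
  exact hf.small ⟨ha, hak⟩ ⟨hb, hbk⟩ hab

theorem large (hC : (C : Set (ℕ × ℕ)).OrdConnected)
    (hf : SwitchInv n k C f) (hs : IsSwitchAt n k C f c' c) :
    StrictMonoOn (f ∘ Equiv.swap c c') {x | x ∈ C ∧ k < (f ∘ Equiv.swap c c') x} := by
  rintro a ⟨ha, hak⟩ b ⟨hb, hbk⟩ hab
  have hsmall : ∀ {x}, k < (f ∘ Equiv.swap c c') x → x ≠ c' := by
    intro x hx hxc'
    subst hxc'
    simp only [Function.comp_apply, Equiv.swap_apply_right] at hx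
    exact hx.not_ge hs.le
  have hac' := hsmall hak
  have hbc' := hsmall hbk
  rcases eq_or_ne a c with rfl | hac
  · rw [comp_swap_apply_of_ne hab.ne' hbc'] at hbk ⊢
    simpa using hf.large ⟨hs.mem', hs.lt⟩ ⟨hb, hbk⟩ (hs.covBy.lt.trans hab)
  rw [comp_swap_apply_of_ne hac hac'] at hak ⊢
  rcases eq_or_ne b c with rfl | hbc
  · simpa using lt_of_lt_of_ne' hC hf hs ha hab hac' hak
  rw [comp_swap_apply_of_ne hbc hbc'] at hbk ⊢
  exact hf.large ⟨ha, hak⟩ ⟨hb, hbk⟩ hab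

theorem le_of_mem_shorts (hC : (C : Set (ℕ × ℕ)).OrdConnected)
    (hf : SwitchInv n k C f) (hs : IsSwitchAt n k C f c' c) {s : ℕ}
    (hmem : s ∈ shorts n C (f ∘ Equiv.swap c c')) : f c ≤ s := by
  obtain ⟨x, hx, rfl, y, hy, hyx, hlt⟩ := isShort_iff.1 (Finset.mem_filter.1 hmem).2
  rcases eq_or_ne x c with rfl | hxc
  · simpa using hs.lt'.le
  rcases eq_or_ne x c' with rfl | hxc'
  · simp
  rw [comp_swap_apply_of_ne hxc hxc'] at hlt ⊢
  by_contra! hxi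
  by_cases hy' : y = c ∨ y = c'
  · have hc'x : c' < x := by
      rcases hy' with rfl | rfl
      exacts [hs.covBy.lt.trans hyx.lt, hyx.lt]
    exact (lt_of_lt_of_ne hC hf.isFilling hs hx hc'x hxc).not_gt hxi
  obtain ⟨hyc, hyc'⟩ := not_or.1 hy'
  rw [comp_swap_apply_of_ne hyc hyc'] at hlt
  exact (hs.le_shorts _ (hf.isFilling.mem_shorts hy hx hyx hlt)).not_gt hxi

theorem le_of_covBy (hf : SwitchInv n k C f) (hs : IsSwitchAt n k C f c' c) (hb : b ∈ C)
    (hd : d ∈ C) (hbd : b ⋖ d) (hbk : (f ∘ Equiv.swap c c') b ≤ k)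
    (hdk : k < (f ∘ Equiv.swap c c') d) : (f ∘ Equiv.swap c c') b ≤ f c := by
  rcases eq_or_ne b c with rfl | hbc
  · exact absurd hbk (by simpa using hs.lt)
  rcases eq_or_ne b c' with rfl | hbc'
  · simp
  rw [comp_swap_apply_of_ne hbc hbc'] at hbk ⊢
  rcases eq_or_ne d c' with rfl | hdc'
  · exact absurd hdk (by simpa using hs.le)
  rcases eq_or_ne d c with rfl | hdc
  · exact (hf.small ⟨hb, hbk⟩ ⟨hs.mem, hs.le⟩ hbd.lt).le
  rw [comp_swap_apply_of_ne hdc hdc'] at hdk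
  exact hf.le_shorts hb hd hbd hbk hdk _ hs.mem_shorts

theorem switchInv (hC : (C : Set (ℕ × ℕ)).OrdConnected)
    (hf : SwitchInv n k C f) (hs : IsSwitchAt n k C f c' c) :
    SwitchInv n k C (f ∘ Equiv.swap c c') :=
  ⟨hf.isFilling.comp_swap hs.mem hs.mem', small hC hf hs, large hC hf hs,
    fun _ hb _ hd hbd hbk hdk _ hmem =>
      (le_of_covBy hf hs hb hd hbd hbk hdk).trans (le_of_mem_shorts hC hf hs hmem)⟩

end IsSwitchAt

theorem SwitchInv.step (hC : (C : Set (ℕ × ℕ)).OrdConnected) (hf : SwitchInv n k C f) :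
    SwitchInv n k C (stepFun n C f) := by
  by_cases hne : (shorts n C f).Nonempty
  · obtain ⟨c', c, hs⟩ := hf.exists_isSwitchAt hne
    rw [hs.stepFun_eq]
    exact hs.switchInv hC hf
  · rwa [stepFun, dif_neg hne]

theorem IsSwitchAt.le_of_comp_swap_eq {f₁ f₂ : ℕ × ℕ → ℕ} {c₁ c₁' c₂ c₂' : ℕ × ℕ}
    (hs₁ : IsSwitchAt n k C f₁ c₁' c₁) (hf₂ : SwitchInv n k C f₂)
    (hs₂ : IsSwitchAt n k C f₂ c₂' c₂) (h : f₁ ∘ Equiv.swap c₁ c₁' = f₂ ∘ Equiv.swap c₂ c₂') :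
    f₁ c₁ ≤ f₂ c₂ := by
  have hb : (f₂ ∘ Equiv.swap c₂ c₂') c₁' = f₁ c₁ := by rw [← h]; simp
  have hd : (f₂ ∘ Equiv.swap c₂ c₂') c₁ = f₁ c₁' := by rw [← h]; simp
  rw [← hb]
  exact hs₂.le_of_covBy hf₂ hs₁.mem' hs₁.mem hs₁.covBy (hb ▸ hs₁.le) (hd ▸ hs₁.lt)

/-- The result of a step determines the cell `c'` of the moved small entry (through
`le_of_comp_swap_eq`), and then standardness of the large entries determines `c`. -/
theorem SwitchInv.eq_of_stepFun_eq {f₁ f₂ : ℕ × ℕ → ℕ}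
    (hf₁ : SwitchInv n k C f₁) (hf₂ : SwitchInv n k C f₂) (hne₁ : (shorts n C f₁).Nonempty)
    (hne₂ : (shorts n C f₂).Nonempty) (h : stepFun n C f₁ = stepFun n C f₂) : f₁ = f₂ := by
  obtain ⟨c₁', c₁, hs₁⟩ := hf₁.exists_isSwitchAt hne₁
  obtain ⟨c₂', c₂, hs₂⟩ := hf₂.exists_isSwitchAt hne₂
  rw [hs₁.stepFun_eq, hs₂.stepFun_eq] at h
  have hc' : c₁' = c₂' := by
    refine (hf₁.isFilling.comp_swap hs₁.mem hs₁.mem').injOn hs₁.mem' hs₂.mem' ?_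
    calc (f₁ ∘ Equiv.swap c₁ c₁') c₁' = f₁ c₁ := by simp
      _ = f₂ c₂ := (hs₁.le_of_comp_swap_eq hf₂ hs₂ h).antisymm
          (hs₂.le_of_comp_swap_eq hf₁ hs₁ h.symm)
      _ = (f₁ ∘ Equiv.swap c₁ c₁') c₂' := by rw [h]; simp
  subst hc'
  have hc : c₁ = c₂ := by
    by_contra hc
    have e₁ := congrFun h c₂
    rw [comp_swap_apply_of_ne (Ne.symm hc) hs₂.ne, Function.comp_apply,
      Equiv.swap_apply_left] at e₁
    have e₂ := congrFun h c₁
    rw [comp_swap_apply_of_ne hc hs₁.ne, Function.comp_apply, Equiv.swap_apply_left] at e₂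
    have l₁ := hf₁.large ⟨hs₁.mem', hs₁.lt⟩ ⟨hs₂.mem, e₁ ▸ hs₂.lt⟩ hs₂.covBy.lt
    have l₂ := hf₂.large ⟨hs₂.mem', hs₂.lt⟩ ⟨hs₁.mem, e₂.symm ▸ hs₁.lt⟩ hs₁.covBy.lt
    omega
  subst hc
  funext x
  simpa using congrFun h (Equiv.swap c₁ c₁' x)

def LargeIsLower (k : ℕ) (C : Finset (ℕ × ℕ)) (f : ℕ × ℕ → ℕ) : Prop :=
  ∀ ⦃a⦄, a ∈ C → ∀ ⦃b⦄, b ∈ C → a ≤ b → k < f b → k < f a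

theorem IsSwitchAt.not_largeIsLower (hs : IsSwitchAt n k C f c' c) :
    ¬ LargeIsLower k C (f ∘ Equiv.swap c c') := fun h =>
  (h hs.mem' hs.mem hs.covBy.le (by simpa using hs.lt)).not_ge (by simpa using hs.le)

def potential (C : Finset (ℕ × ℕ)) (f : ℕ × ℕ → ℕ) : ℕ := ∑ x ∈ C, f x * (x.1 + x.2)

theorem IsFillingF.potential_le (hf : IsFillingF n C f) :
    potential C f ≤ n * ∑ x ∈ C, (x.1 + x.2) := by
  rw [Finset.mul_sum]
  exact Finset.sum_le_sum fun x hx => Nat.mul_le_mul_right _ (hf.mem_Icc hx).2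

theorem IsSwitchAt.potential_lt (hs : IsSwitchAt n k C f c' c) :
    potential C f < potential C (f ∘ Equiv.swap c c') := by
  have hc' : c' ∈ C.erase c := Finset.mem_erase.2 ⟨hs.ne.symm, hs.mem'⟩
  have hrest : ∑ x ∈ (C.erase c).erase c', (f ∘ Equiv.swap c c') x * (x.1 + x.2) =
      ∑ x ∈ (C.erase c).erase c', f x * (x.1 + x.2) :=
    Finset.sum_congr rfl fun x hx => by
      obtain ⟨hxc', hx⟩ := Finset.mem_erase.1 hx
      rw [comp_swap_apply_of_ne (Finset.mem_erase.1 hx).1 hxc']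
  rw [potential, potential, ← Finset.add_sum_erase _ _ hs.mem, ← Finset.add_sum_erase _ _ hc',
    ← Finset.add_sum_erase _ _ hs.mem, ← Finset.add_sum_erase _ _ hc', hrest]
  simp only [Function.comp_apply, Equiv.swap_apply_left, Equiv.swap_apply_right,
    add_eq_add_add_one_of_covBy hs.covBy]
  nlinarith [hs.lt']

theorem SwitchInv.exists_isStandardF_iterate (hC : (C : Set (ℕ × ℕ)).OrdConnected)
    (hf : SwitchInv n k C f) : ∃ m, IsStandardF C ((stepFun n C)^[m] f) := by
  by_contra! h
  have hinv (m : ℕ) : SwitchInv n k C ((stepFun n C)^[m] f) :=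
    Function.Iterate.rec (SwitchInv n k C) hf (fun _ hg => hg.step hC) m
  have hgrow (m : ℕ) : m ≤ potential C ((stepFun n C)^[m] f) := by
    induction m with
    | zero => exact Nat.zero_le _
    | succ m ih =>
      obtain ⟨c', c, hs⟩ := (hinv m).exists_isSwitchAt ((hinv m).isFilling.shorts_nonempty hC (h m))
      rw [Function.iterate_succ_apply', hs.stepFun_eq]
      exact ih.trans_lt hs.potential_lt
  have hbig := hgrow (n * ∑ x ∈ C, (x.1 + x.2) + 1)
  have hbound := (hinv (n * ∑ x ∈ C, (x.1 + x.2) + 1)).isFilling.potential_le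
  omega

section IterateUntil

variable {α : Type*} {s : α → α} {D P I : α → Prop}

/-- `jdtFun n C` is `iterateUntil (stepFun n C) (IsStandardF C)` by definition. -/
def iterateUntil (s : α → α) (D : α → Prop) (x : α) : α :=
  if h : ∃ m, D (s^[m] x) then s^[Nat.find h] x else x

theorem iterateUntil_spec (hP : ∀ x, P x → P (s x)) {x : α} (hx : P x)
    (h : ∃ m, D (s^[m] x)) : P (iterateUntil s D x) ∧ D (iterateUntil s D x) := by
  rw [iterateUntil, dif_pos h]
  exact ⟨Function.Iterate.rec P hx hP _, Nat.find_spec h⟩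

theorem eq_of_iterate_eq_iterate (hP : ∀ x, P x → P (s x))
    (hinj : ∀ x y, P x → P y → ¬ D x → ¬ D y → s x = s y → x = y)
    (hstart : ∀ x y, P x → ¬ D x → I y → s x ≠ y) :
    ∀ m₁ m₂ x y, P x → P y → I x → I y → (∀ j < m₁, ¬ D (s^[j] x)) →
      (∀ j < m₂, ¬ D (s^[j] y)) → s^[m₁] x = s^[m₂] y → x = y := by
  intro m₁
  induction m₁ with
  | zero =>
    rintro (_ | m₂) x y - hy hIx - - h₂ h
    · exact h
    · rw [Function.iterate_succ_apply'] at h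
      exact absurd h.symm
        (hstart _ x (Function.Iterate.rec P hy hP m₂) (h₂ m₂ m₂.lt_succ_self) hIx)
  | succ m₁ ih =>
    rintro (_ | m₂) x y hx hy hIx hIy h₁ h₂ h
    · rw [Function.iterate_succ_apply'] at h
      exact absurd h
        (hstart _ y (Function.Iterate.rec P hx hP m₁) (h₁ m₁ m₁.lt_succ_self) hIy)
    · rw [Function.iterate_succ_apply', Function.iterate_succ_apply'] at h
      refine ih m₂ x y hx hy hIx hIy (fun j hj => h₁ j (hj.trans m₁.lt_succ_self))
        (fun j hj => h₂ j (hj.trans m₂.lt_succ_self)) (hinj _ _ ?_ ?_ ?_ ?_ h)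
      exacts [Function.Iterate.rec P hx hP m₁, Function.Iterate.rec P hy hP m₂,
        h₁ m₁ m₁.lt_succ_self, h₂ m₂ m₂.lt_succ_self]

theorem injOn_iterateUntil (hP : ∀ x, P x → P (s x)) (hterm : ∀ x, P x → ∃ m, D (s^[m] x))
    (hinj : ∀ x y, P x → P y → ¬ D x → ¬ D y → s x = s y → x = y)
    (hstart : ∀ x y, P x → ¬ D x → I y → s x ≠ y) :
    Set.InjOn (iterateUntil s D) {x | P x ∧ I x} := by
  rintro x ⟨hx, hIx⟩ y ⟨hy, hIy⟩ h
  rw [iterateUntil, iterateUntil, dif_pos (hterm x hx), dif_pos (hterm y hy)] at h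
  exact eq_of_iterate_eq_iterate hP hinj hstart _ _ x y hx hy hIx hIy
    (fun _ => Nat.find_min _) (fun _ => Nat.find_min _) h

end IterateUntil

def IsIsolated (C : Finset (ℕ × ℕ)) (b : ℕ × ℕ) : Prop :=
  b ∈ C ∧ ∀ x ∈ C, x ≤ b ∨ b ≤ x → x = b

theorem IsIsolated.ne_of_lt (hb : IsIsolated C b) {x y : ℕ × ℕ} (hx : x ∈ C) (hy : y ∈ C)
    (hxy : x < y) : x ≠ b ∧ y ≠ b := by
  constructor
  · rintro rfl
    exact hxy.ne' (hb.2 y hy (Or.inr hxy.le))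
  · rintro rfl
    exact hxy.ne (hb.2 x hx (Or.inl hxy.le))

theorem SwitchInv.stepFun_apply_of_isIsolated (hf : SwitchInv n k C f) (hb : IsIsolated C b) :
    stepFun n C f b = f b := by
  by_cases hne : (shorts n C f).Nonempty
  · obtain ⟨c', c, hs⟩ := hf.exists_isSwitchAt hne
    obtain ⟨hc'b, hcb⟩ := hb.ne_of_lt hs.mem' hs.mem hs.covBy.lt
    rw [hs.stepFun_eq, comp_swap_apply_of_ne hcb.symm hc'b.symm]
  · rw [stepFun, dif_neg hne]

theorem SwitchInv.jdtFun_spec (hC : (C : Set (ℕ × ℕ)).OrdConnected) (hb : IsIsolated C b)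
    (hf : SwitchInv n k C f) :
    IsFillingF n C (jdtFun n C f) ∧ IsStandardF C (jdtFun n C f) ∧ jdtFun n C f b = f b := by
  obtain ⟨⟨hinv, hbox⟩, hstd⟩ := iterateUntil_spec (P := fun g => SwitchInv n k C g ∧ g b = f b)
    (fun _ hg => ⟨hg.1.step hC, (hg.1.stepFun_apply_of_isIsolated hb).trans hg.2⟩) ⟨hf, rfl⟩
    (hf.exists_isStandardF_iterate hC)
  exact ⟨hinv.isFilling, hstd, hbox⟩

theorem injOn_jdtFun (hC : (C : Set (ℕ × ℕ)).OrdConnected) :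
    Set.InjOn (jdtFun n C) {f | SwitchInv n k C f ∧ LargeIsLower k C f} :=
  injOn_iterateUntil (fun _ hg => hg.step hC) (fun _ hg => hg.exists_isStandardF_iterate hC)
    (fun _ _ h₁ h₂ hn₁ hn₂ => h₁.eq_of_stepFun_eq h₂ (h₁.isFilling.shorts_nonempty hC hn₁)
      (h₂.isFilling.shorts_nonempty hC hn₂))
    (fun _ _ hg hn hI => by
      obtain ⟨c', c, hs⟩ := hg.exists_isSwitchAt (hg.isFilling.shorts_nonempty hC hn)
      rw [hs.stepFun_eq]
      rintro rfl
      exact hs.not_largeIsLower hI)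

theorem mapEntries_apply_of_mem (hc : c ∈ C) : mapEntries C φ f c = φ (f c) := if_pos hc

namespace IsFillingF

theorem mapEntries (hf : IsFillingF n C f) (hφ : Set.BijOn φ (Set.Icc 1 n) (Set.Icc 1 n)) :
    IsFillingF n C (mapEntries C φ f) :=
  ⟨(hφ.comp hf.1).congr fun _ hc => (if_pos hc).symm, fun _ hc => if_neg hc⟩

theorem mapEntries_mapEntries (hf : IsFillingF n C f) (h : Set.LeftInvOn ψ φ (Set.Icc 1 n)) :
    SchurRot.mapEntries C ψ (SchurRot.mapEntries C φ f) = f := by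
  funext c
  by_cases hc : c ∈ C
  · simp only [SchurRot.mapEntries, if_pos hc]
    exact h (hf.mem_Icc hc)
  · simp only [SchurRot.mapEntries, if_neg hc]
    exact (hf.2 c hc).symm

end IsFillingF

theorem injOn_mapEntries (h : Set.LeftInvOn ψ φ (Set.Icc 1 n)) :
    Set.InjOn (mapEntries C φ) {f | IsFillingF n C f} := fun _ hf _ hg hfg => by
  rw [← IsFillingF.mapEntries_mapEntries hf h, hfg, IsFillingF.mapEntries_mapEntries hg h]

theorem finite_setOf_isFillingF : {f | IsFillingF n C f}.Finite := by
  refine Set.Finite.of_finite_image (Set.toFinite _)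
    (f := fun f (c : C) => (⟨min (f c) n, by omega⟩ : Fin (n + 1))) fun f hf g hg hfg => ?_
  funext c
  by_cases hc : c ∈ C
  · have := congrArg Fin.val (congrFun hfg ⟨c, hc⟩)
    have := (hf.mem_Icc hc).2
    have := (hg.mem_Icc hc).2
    simp only at *
    omega
  · rw [hf.2 c hc, hg.2 c hc]

theorem rotval_eq (hk : k ≤ n) {e : ℕ} (he : e ∈ Set.Icc 1 n) :
    rotval n k e = if e + k ≤ n then e + k else e + k - n := by
  obtain ⟨he₁, he₂⟩ := he
  unfold rotval
  split_ifs with h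
  · rw [Nat.mod_eq_of_lt (by omega)]
    omega
  · rw [Nat.mod_eq_sub_mod (by omega), Nat.mod_eq_of_lt (by omega)]
    omega

theorem rotval_mem_Icc (hn : 0 < n) {e : ℕ} : rotval n k e ∈ Set.Icc 1 n :=
  ⟨Nat.le_add_left 1 _, Nat.mod_lt _ hn⟩

theorem rotval_leftInvOn (hk : k ≤ n) :
    Set.LeftInvOn (rotval n (n - k)) (rotval n k) (Set.Icc 1 n) :=
  fun e he => by
    have hn : 0 < n := he.1.trans_lt' Nat.one_pos |>.trans_le he.2
    rw [rotval_eq (Nat.sub_le n k) (rotval_mem_Icc hn), rotval_eq hk he]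
    obtain ⟨he₁, he₂⟩ := he
    split_ifs <;> omega

theorem rotval_bijOn (hk : k ≤ n) (hn : 0 < n) :
    Set.BijOn (rotval n k) (Set.Icc 1 n) (Set.Icc 1 n) :=
  Set.InvOn.bijOn ⟨rotval_leftInvOn hk, by
      simpa only [Nat.sub_sub_self hk] using rotval_leftInvOn (Nat.sub_le n k)⟩
    (fun _ _ => rotval_mem_Icc hn) fun _ _ => rotval_mem_Icc hn

theorem switchInv_mapEntries_rotval (hk : k < n) (hT : IsFillingF n C T)
    (hTs : StrictMonoOn T C) :
    SwitchInv n k C (mapEntries C (rotval n k) T) ∧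
      LargeIsLower k C (mapEntries C (rotval n k) T) := by
  set g := mapEntries C (rotval n k) T
  have hrot : ∀ ⦃a⦄, a ∈ C → ∀ ⦃b⦄, b ∈ C → a < b →
      (k < g b → k < g a) ∧ ((g a ≤ k ↔ g b ≤ k) → g a < g b) := by
    intro a ha b hb hab
    have hlt := hTs ha hb hab
    have ha' := hT.mem_Icc ha
    have hb' := hT.mem_Icc hb
    simp only [g, mapEntries_apply_of_mem ha, mapEntries_apply_of_mem hb, rotval_eq hk.le ha',
      rotval_eq hk.le hb']
    obtain ⟨_, _⟩ := ha'
    obtain ⟨_, _⟩ := hb'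
    constructor <;> split_ifs <;> omega
  have hlower : LargeIsLower k C g := fun a ha b hb hab hbk => by
    rcases hab.eq_or_lt with rfl | hab
    exacts [hbk, (hrot ha hb hab).1 hbk]
  refine ⟨⟨hT.mapEntries (rotval_bijOn hk.le (by omega)),
    fun a ha b hb hab => (hrot ha.1 hb.1 hab).2 (iff_of_true ha.2 hb.2),
    fun a ha b hb hab => (hrot ha.1 hb.1 hab).2 (iff_of_false ha.2.not_ge hb.2.not_ge),
    fun b hb d hd hbd hbk hdk => absurd (hlower hb hd hbd.le hdk) hbk.not_gt⟩, hlower⟩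

def sytAt (n : ℕ) (C : Finset (ℕ × ℕ)) (b : ℕ × ℕ) (v : ℕ) : Set (ℕ × ℕ → ℕ) :=
  {P | IsFillingF n C P ∧ IsStandardF C P ∧ P b = v}

theorem mapEntries_mem_sytAt (hC : (C : Set (ℕ × ℕ)).OrdConnected) (hb : IsIsolated C b)
    {v w : ℕ} (hP : P ∈ sytAt n C b v) (hφ : Set.BijOn φ (Set.Icc 1 n) (Set.Icc 1 n))
    (hmono : StrictMonoOn φ (Set.Icc 1 n \ {v})) (hφv : φ v = w) :
    mapEntries C φ P ∈ sytAt n C b w := by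
  obtain ⟨hP, hPs, hPb⟩ := hP
  refine ⟨hP.mapEntries hφ, isStandardF_of_strictMonoOn fun x hx y hy hxy => ?_, ?_⟩
  · obtain ⟨hxb, hyb⟩ := hb.ne_of_lt hx hy hxy
    rw [mapEntries_apply_of_mem hx, mapEntries_apply_of_mem hy]
    exact hmono ⟨hP.mem_Icc hx, hPb ▸ hP.injOn.ne hx hb.1 hxb⟩
      ⟨hP.mem_Icc hy, hPb ▸ hP.injOn.ne hy hb.1 hyb⟩ (hPs.strictMonoOn hC hx hy hxy)
  · rw [mapEntries_apply_of_mem hb.1, hPb, hφv]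

theorem ncard_sytAt (hC : (C : Set (ℕ × ℕ)).OrdConnected) (hb : IsIsolated C b) {v : ℕ}
    (hv : v ∈ Set.Icc 1 n) : (sytAt n C b v).ncard = (sytAt n C b n).ncard := by
  obtain ⟨hv₁, hvn⟩ := hv
  let ψ : ℕ → ℕ := fun e => if e = v then n else if v < e then e - 1 else e
  let φ : ℕ → ℕ := fun e => if e = n then v else if v ≤ e then e + 1 else e
  have hψ : Set.MapsTo ψ (Set.Icc 1 n) (Set.Icc 1 n) := fun e ⟨_, _⟩ => by
    simp only [ψ, Set.mem_Icc]; split_ifs <;> omega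
  have hφ : Set.MapsTo φ (Set.Icc 1 n) (Set.Icc 1 n) := fun e ⟨_, _⟩ => by
    simp only [φ, Set.mem_Icc]; split_ifs <;> omega
  have hinv : Set.InvOn φ ψ (Set.Icc 1 n) (Set.Icc 1 n) :=
    ⟨fun e ⟨_, _⟩ => by simp only [ψ, φ]; split_ifs <;> omega,
      fun e ⟨_, _⟩ => by simp only [ψ, φ]; split_ifs <;> omega⟩
  have hψmono : StrictMonoOn ψ (Set.Icc 1 n \ {v}) := fun x hx y hy hxy => by
    simp only [Set.mem_sdiff, Set.mem_Icc, Set.mem_singleton_iff] at hx hy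
    simp only [ψ]; split_ifs <;> omega
  have hφmono : StrictMonoOn φ (Set.Icc 1 n \ {n}) := fun x hx y hy hxy => by
    simp only [Set.mem_sdiff, Set.mem_Icc, Set.mem_singleton_iff] at hx hy
    simp only [φ]; split_ifs <;> omega
  refine Set.BijOn.ncard_eq (f := mapEntries C ψ) (Set.InvOn.bijOn (f' := mapEntries C φ)
    ⟨fun P hP => hP.1.mapEntries_mapEntries hinv.1, fun P hP => hP.1.mapEntries_mapEntries hinv.2⟩
    (fun P hP => mapEntries_mem_sytAt hC hb hP (hinv.bijOn hψ hφ) hψmono (if_pos rfl))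
    (fun P hP => mapEntries_mem_sytAt hC hb hP (hinv.symm.bijOn hφ hψ) hφmono (if_pos rfl)))

theorem bijOn_jdtFun_mapEntries_rotval (hC : (C : Set (ℕ × ℕ)).OrdConnected)
    (hb : IsIsolated C b) (hk : k < n) :
    Set.BijOn (jdtFun n C) (mapEntries C (rotval n k) '' sytAt n C b n)
      (sytAt n C b (rotval n k n)) := by
  have hinv (T) (hT : T ∈ sytAt n C b n) :=
    switchInv_mapEntries_rotval hk hT.1 (hT.2.1.strictMonoOn hC)
  have hmaps : Set.MapsTo (jdtFun n C) (mapEntries C (rotval n k) '' sytAt n C b n)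
      (sytAt n C b (rotval n k n)) := by
    rintro _ ⟨T, hT, rfl⟩
    obtain ⟨h₁, h₂, h₃⟩ := (hinv T hT).1.jdtFun_spec hC hb
    exact ⟨h₁, h₂, by rw [h₃, mapEntries_apply_of_mem hb.1, hT.2.2]⟩
  have hinj : Set.InjOn (jdtFun n C) (mapEntries C (rotval n k) '' sytAt n C b n) :=
    (injOn_jdtFun hC).mono (by rintro _ ⟨T, hT, rfl⟩; exact hinv T hT)
  refine ⟨hmaps, hinj, (Set.eq_of_subset_of_ncard_le hmaps.image_subset ?_
    (finite_setOf_isFillingF.subset fun _ hP => hP.1)).superset⟩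
  rw [hinj.ncard_image,
    ((injOn_mapEntries (rotval_leftInvOn hk.le)).mono fun _ hT => hT.1).ncard_image,
    ncard_sytAt hC hb (rotval_mem_Icc (by omega))]

theorem mem_boxShape {lam : YoungDiagram} {c : ℕ × ℕ} :
    c ∈ boxShape lam ↔ c = boxCell lam ∨ 1 ≤ c.1 ∧ (c.1 - 1, c.2) ∈ lam := by
  simp only [boxShape, Finset.mem_insert, Finset.mem_image, YoungDiagram.mem_cells]
  refine or_congr_right ⟨?_, fun ⟨h₁, h₂⟩ => ⟨_, h₂, Prod.ext (by dsimp only; omega) rfl⟩⟩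
  rintro ⟨a, ha, rfl⟩
  exact ⟨Nat.le_add_left 1 a.1, by simpa using ha⟩

theorem isIsolated_boxCell (lam : YoungDiagram) : IsIsolated (boxShape lam) (boxCell lam) := by
  refine ⟨Finset.mem_insert_self _ _, fun x hx hcomp => ?_⟩
  rcases mem_boxShape.1 hx with h | ⟨hx₁, hx₂⟩
  · exact h
  have := YoungDiagram.mem_iff_lt_rowLen.1 hx₂
  have := lam.rowLen_anti 0 (x.1 - 1) (Nat.zero_le _)
  simp only [boxCell, Prod.le_def] at hcomp
  omega

theorem ordConnected_boxShape (lam : YoungDiagram) :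
    (boxShape lam : Set (ℕ × ℕ)).OrdConnected := by
  have hbox := isIsolated_boxCell lam
  refine ⟨fun a ha b hb x hx => ?_⟩
  rcases mem_boxShape.1 ha with rfl | ⟨ha₁, -⟩
  · obtain rfl := hbox.2 b hb (Or.inr (hx.1.trans hx.2))
    rw [le_antisymm hx.2 hx.1]
    exact hbox.1
  rcases mem_boxShape.1 hb with rfl | ⟨-, hb₂⟩
  · obtain rfl := hbox.2 a ha (Or.inl (hx.1.trans hx.2))
    simp [boxCell] at ha₁
  obtain ⟨⟨h₁, -⟩, ⟨h₂, h₃⟩⟩ := And.intro (Prod.le_def.1 hx.1) (Prod.le_def.1 hx.2)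
  exact mem_boxShape.2 (Or.inr ⟨ha₁.trans h₁, lam.up_left_mem (by omega) h₃ hb₂⟩)

theorem jdt_bijective_general (n : ℕ) (lam : YoungDiagram) (k : ℕ) (hk : k < n) :
    Set.BijOn (jdtFun n (boxShape lam))
      {f | ∃ T : ℕ × ℕ → ℕ, IsFillingF n (boxShape lam) T ∧
        IsStandardF (boxShape lam) T ∧ deltaOf lam T = n ∧
        f = mapEntries (boxShape lam) (rotval n k) T}
      {P | IsFillingF n (boxShape lam) P ∧ IsStandardF (boxShape lam) P ∧
        deltaOf lam P = rotval n k n} := by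
  convert bijOn_jdtFun_mapEntries_rotval (ordConnected_boxShape lam) (isIsolated_boxCell lam) hk
    using 1
  · ext f
    exact ⟨fun ⟨T, h₁, h₂, h₃, hf⟩ => ⟨T, ⟨h₁, h₂, h₃⟩, hf.symm⟩,
      fun ⟨T, ⟨h₁, h₂, h₃⟩, hf⟩ => ⟨T, h₁, h₂, h₃, hf.symm⟩⟩
  · rfl

/-- Lemma 4.3. For every `λ ⊢ n-1` and `0 ≤ k < n`, the map `jdt` is
a bijection from `{k+T : T ∈ SYT(λ^□), δ(T) = n}` onto `{P ∈ SYT(λ^□) : δ(P) = k}`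
(where the value `k` is taken modulo `n` with representative in `{1,…,n}`). -/
theorem jdt_bijective (n : ℕ) (lam : YoungDiagram) (hlam : lam.cells.card = n - 1)
    (k : ℕ) (hk : k < n) :
    Set.BijOn (jdtFun n (boxShape lam))
      {f | ∃ T : ℕ × ℕ → ℕ, IsFillingF n (boxShape lam) T ∧
        IsStandardF (boxShape lam) T ∧ deltaOf lam T = n ∧
        f = mapEntries (boxShape lam) (rotval n k) T}
      {P | IsFillingF n (boxShape lam) P ∧ IsStandardF (boxShape lam) P ∧
        deltaOf lam P = rotval n k n} :=
  jdt_bijective_general n lam k hk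

end SchurRot
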